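/- Let σ be an m×n real matrix and μ ∈ ℝ^m. The constrained quadratic optimization problem max { πᵀμ − (1/2)πᵀσσᵀπ : π ∈ ℝ^m, πᵀ1 = 1 } admits a maximizer if and only if the vector (μ, 1) ∈ ℝ^(m+1) lies in the column space (image) of the block matrix M = [[σσᵀ, 1],[1ᵀ, 0]], where 1 denotes the all-ones vector in ℝ^m. -/

import Mathlib

/-!
Since `σσᵀ` is positive semidefinite, the growth rate is concave, so on the budget hyperplane
`πᵀ1 = 1` a feasible `π` is a maximizer iff the gradient `μ - σσᵀπ` annihilates every direction
`d` with `dᵀ1 = 0`, i.e. iff `μ - σσᵀπ = λ1` for some `λ`. The equations `σσᵀπ + λ1 = μ` and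
`1ᵀπ = 1` are exactly the two block rows of `M (π, λ) = (μ, 1)`.
-/

open Matrix

section

variable {ι : Type*} [Fintype ι]

lemma exists_eq_const_of_forall_dotProduct_eq_zero {R : Type*} [CommRing R] [Nonempty ι]
    {v : ι → R} (h : ∀ d : ι → R, d ⬝ᵥ (fun _ => (1 : R)) = 0 → d ⬝ᵥ v = 0) :
    ∃ c : R, v = fun _ => c := by
  classical
  obtain ⟨i⟩ := ‹Nonempty ι›
  refine ⟨v i, funext fun j => ?_⟩
  have := h (Pi.single j 1 - Pi.single i 1) (by simp [sub_dotProduct])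
  rwa [sub_dotProduct, single_dotProduct, single_dotProduct, one_mul, one_mul, sub_eq_zero] at this

theorem mem_range_mulVecLin_kkt_iff {R : Type*} [CommSemiring R] (A : Matrix ι ι R) (μ : ι → R) :
    Sum.elim μ (fun _ : Unit => (1 : R)) ∈
        LinearMap.range (mulVecLin (fromBlocks A (of fun _ _ => (1 : R)) (of fun _ _ => (1 : R))
          (0 : Matrix Unit Unit R))) ↔
      ∃ π : ι → R, π ⬝ᵥ (fun _ => (1 : R)) = 1 ∧ ∃ c : R, A *ᵥ π + (fun _ => c) = μ := by
  have hcol : ∀ x : Unit → R, (of fun _ _ => (1 : R) : Matrix ι Unit R) *ᵥ x = fun _ => x () := by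
    intro x; ext; simp [mulVec, dotProduct]
  have hrow : ∀ π : ι → R,
      (of fun _ _ => (1 : R) : Matrix Unit ι R) *ᵥ π = fun _ => π ⬝ᵥ (fun _ => 1) := by
    intro π; ext; simp [mulVec, dotProduct, mul_comm]
  simp only [LinearMap.mem_range, mulVecLin_apply, fromBlocks_mulVec, hcol, hrow, zero_mulVec,
    add_zero]
  constructor
  · rintro ⟨y, hy⟩
    exact ⟨y ∘ Sum.inl, congrFun hy (Sum.inr ()), y (Sum.inr ()),
      funext fun i => congrFun hy (Sum.inl i)⟩
  · rintro ⟨π, hπ, c, hμ⟩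
    exact ⟨Sum.elim π fun _ => c, by simp [hμ, hπ]⟩

namespace GrowthOptimal

noncomputable def growthRate (A : Matrix ι ι ℝ) (μ π : ι → ℝ) : ℝ :=
  π ⬝ᵥ μ - (1 / 2) * (π ⬝ᵥ A *ᵥ π)

def budgetSet (ι : Type*) [Fintype ι] : Set (ι → ℝ) := {π | π ⬝ᵥ (fun _ => (1 : ℝ)) = 1}

variable {A : Matrix ι ι ℝ} {μ π : ι → ℝ}

lemma mem_budgetSet : π ∈ budgetSet ι ↔ π ⬝ᵥ (fun _ => (1 : ℝ)) = 1 := Iff.rfl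

lemma growthRate_add (hA : A.IsHermitian) (μ π d : ι → ℝ) :
    growthRate A μ (π + d) =
      growthRate A μ π + d ⬝ᵥ (μ - A *ᵥ π) - (1 / 2) * (d ⬝ᵥ A *ᵥ d) := by
  have hAt : Aᵀ = A := isHermitian_iff_isSymm.mp hA
  have hsymm : π ⬝ᵥ A *ᵥ d = d ⬝ᵥ A *ᵥ π := by
    rw [dotProduct_mulVec, ← hAt, vecMul_transpose, hAt, dotProduct_comm]
  simp only [growthRate, mulVec_add, add_dotProduct, dotProduct_add, dotProduct_sub, hsymm]
  ring

lemma dotProduct_sub_mulVec_eq_zero_of_isMaxOn (hA : A.PosSemidef)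
    (hmax : IsMaxOn (growthRate A μ) (budgetSet ι) π) (hπ : π ∈ budgetSet ι)
    {d : ι → ℝ} (hd : d ⬝ᵥ (fun _ => (1 : ℝ)) = 0) : d ⬝ᵥ (μ - A *ᵥ π) = 0 := by
  set c := d ⬝ᵥ (μ - A *ᵥ π)
  -- On the feasible line `π + t • d` the objective gains `c t - (dᵀ A d / 2) t²`, which is never
  -- positive, so the discriminant `c²` of this quadratic is nonpositive.
  have hquad : ∀ t : ℝ, 0 ≤ (1 / 2 * (d ⬝ᵥ A *ᵥ d)) * (t * t) + (-c) * t + 0 := by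
    intro t
    have hle := isMaxOn_iff.mp hmax (π + t • d) (by
      simpa [mem_budgetSet, add_dotProduct, hd] using hπ)
    rw [growthRate_add hA.isHermitian] at hle
    simp only [smul_dotProduct, mulVec_smul, dotProduct_smul, smul_eq_mul] at hle
    linarith
  have hdisc := discrim_le_zero hquad
  rw [discrim] at hdisc
  nlinarith [sq_nonneg c]

theorem isMaxOn_growthRate_iff (hA : A.PosSemidef) (hπ : π ∈ budgetSet ι) :
    IsMaxOn (growthRate A μ) (budgetSet ι) π ↔ ∃ c : ℝ, A *ᵥ π + (fun _ => c) = μ := by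
  constructor
  · intro hmax
    have : Nonempty ι := by
      by_contra h
      rw [not_nonempty_iff] at h
      simp [mem_budgetSet, dotProduct] at hπ
    obtain ⟨c, hc⟩ := exists_eq_const_of_forall_dotProduct_eq_zero
      fun d hd => dotProduct_sub_mulVec_eq_zero_of_isMaxOn hA hmax hπ hd
    exact ⟨c, (sub_eq_iff_eq_add'.mp hc).symm⟩
  · rintro ⟨c, hc⟩
    refine isMaxOn_iff.mpr fun π' hπ' => ?_
    rw [mem_budgetSet] at hπ hπ'
    have hgrad : (π' - π) ⬝ᵥ (μ - A *ᵥ π) = 0 := by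
      have hconst : (fun _ : ι => c) = c • fun _ => (1 : ℝ) := by ext; simp
      rw [← hc, add_sub_cancel_left, hconst, dotProduct_smul, sub_dotProduct, hπ', hπ, sub_self,
        smul_zero]
    have hcurv := hA.dotProduct_mulVec_nonneg (π' - π)
    rw [star_trivial] at hcurv
    rw [← add_sub_cancel π π', growthRate_add hA.isHermitian, hgrad]
    linarith

end GrowthOptimal

end

theorem gop_exists_iff_range (m n : ℕ) (σ : Matrix (Fin m) (Fin n) ℝ) (μ : Fin m → ℝ) :
    (∃ π : Fin m → ℝ, π ⬝ᵥ (fun _ => (1 : ℝ)) = 1 ∧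
      ∀ π' : Fin m → ℝ, π' ⬝ᵥ (fun _ => (1 : ℝ)) = 1 →
        π' ⬝ᵥ μ - (1 / 2) * (π' ⬝ᵥ ((σ * σᵀ).mulVec π')) ≤
          π ⬝ᵥ μ - (1 / 2) * (π ⬝ᵥ ((σ * σᵀ).mulVec π))) ↔
    Sum.elim μ (fun _ : Unit => (1 : ℝ)) ∈
      LinearMap.range (Matrix.mulVecLin
        (Matrix.fromBlocks (σ * σᵀ) (Matrix.of fun _ _ => (1 : ℝ))
          (Matrix.of fun _ _ => (1 : ℝ)) (0 : Matrix Unit Unit ℝ))) := by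
  have hA : (σ * σᵀ).PosSemidef := by
    simpa only [conjTranspose_eq_transpose_of_trivial] using posSemidef_self_mul_conjTranspose σ
  rw [mem_range_mulVecLin_kkt_iff]
  refine exists_congr fun π => and_congr_right fun hπ => ?_
  rw [← GrowthOptimal.isMaxOn_growthRate_iff hA hπ, isMaxOn_iff]
  rfl
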